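/- Let w be a word in the free monoid on the 12 letters {a_j, b_j, c_j, d_j : j ∈ Z/3} and fix i ∈ Z/3. If w is balanced (i.e., for each j ∈ Z/3 the bracket expression β_j(w) obtained via the substitution a_{j±1}, b_{j-1}, d_{j+1} ↦ '(' ; b_{j+1}, c_{j±1}, d_{j-1} ↦ ')' ; a_j, b_j, c_j, d_j ↦ empty, is balanced), then the image of w in the free abelian group Z^3 under the homomorphism a_j ↦ ã_j, b_j ↦ ã_{j-1} − ã_{j+1}, c_j ↦ −ã_j, d_j ↦ ã_{j+1} − ã_{j-1} is zero. -/

import Mathlib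

/-- The 12-letter alphabet (the case `n = 2` of `A_n`). -/
inductive Letter : Type
  | a (i : ZMod 3)
  | b (i : ZMod 3)
  | c (i : ZMod 3)
  | d (i : ZMod 3)

/-- The basis element `ã_i` of `ℤ³ = (ℤ/3 → ℤ)`. -/
def atil (i : ZMod 3) : ZMod 3 → ℤ := Pi.single i 1

/-- The image of each letter: `a_j ↦ ã_j`, `b_j ↦ ã_{j-1} − ã_{j+1}`,
`c_j ↦ −ã_j`, `d_j ↦ ã_{j+1} − ã_{j-1}`. -/
def μval : Letter → (ZMod 3 → ℤ)
  | .a j => atil j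
  | .b j => atil (j - 1) - atil (j + 1)
  | .c j => -atil j
  | .d j => atil (j + 1) - atil (j - 1)

/-- The bracket substitution for `β_j`: `true` is a left bracket `'('`, `false`
is a right bracket `')'`; `a_{j±1}, b_{j-1}, d_{j+1} ↦ '('`,
`b_{j+1}, c_{j±1}, d_{j-1} ↦ ')'`, `a_j, b_j, c_j, d_j ↦` empty. -/
def brk (j : ZMod 3) : Letter → List Bool
  | .a k => if k = j then [] else [true]
  | .b k => if k = j - 1 then [true] else if k = j + 1 then [false] else []
  | .c k => if k = j then [] else [false]
  | .d k => if k = j + 1 then [true] else if k = j - 1 then [false] else []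

/-- A bracket expression is balanced: every prefix has at least as many `'('` as
`')'`, and the totals are equal. -/
def BalancedBr (β : List Bool) : Prop :=
  (∀ p : List Bool, p <+: β → p.count false ≤ p.count true) ∧
    β.count true = β.count false


/-!
Only the total bracket counts matter. Let `deg` count the letters `a` minus the letters `c`.
For every letter `l`, the excess of `'('` over `')'` in `β_j(l)` is `deg l − μ(l)_j`, so if
every `β_j(w)` has as many `'('` as `')'`, each coordinate of `μ(w)` equals `deg w`. The three
coordinates of `μ(l)` add up to `deg l`, hence `3 deg w = deg w`, so `deg w = 0` and `μ(w) = 0`.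
-/

namespace Letter

def degree : Letter → ℤ
  | a _ => 1
  | c _ => -1
  | _ => 0

theorem count_true_sub_count_false_brk (j : ZMod 3) (l : Letter) :
    ((brk j l).count true : ℤ) - (brk j l).count false = l.degree - μval l j := by
  cases l <;> rename_i k <;> fin_cases j <;> fin_cases k <;> decide

theorem sum_μval_apply (l : Letter) : ∑ j, μval l j = l.degree := by
  cases l <;> rename_i k <;> fin_cases k <;> decide

end Letter

theorem count_true_sub_count_false_flatten_map_brk (w : List Letter) (j : ZMod 3) :
    ((w.map (brk j)).flatten.count true : ℤ) - (w.map (brk j)).flatten.count false =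
      (w.map Letter.degree).sum - (w.map μval).sum j := by
  induction w with
  | nil => simp
  | cons l w ih =>
    simp only [List.map_cons, List.flatten_cons, List.count_append, List.sum_cons, Pi.add_apply]
    push_cast
    linarith [Letter.count_true_sub_count_false_brk j l]

theorem sum_apply_sum_map_μval (w : List Letter) :
    ∑ j, (w.map μval).sum j = (w.map Letter.degree).sum := by
  induction w with
  | nil => simp
  | cons l w ih =>
    simp only [List.map_cons, List.sum_cons, Pi.add_apply, Finset.sum_add_distrib, ih,
      Letter.sum_μval_apply]

/-- If a word `w` is balanced (each `β_j(w)` is a balanced bracket expression), then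
its image in `ℤ³` is zero. -/
theorem balanced_word_maps_to_zero (w : List Letter)
    (h : ∀ j : ZMod 3, BalancedBr ((w.map (brk j)).flatten)) :
    (w.map μval).sum = 0 := by
  have hcoord (j : ZMod 3) : (w.map μval).sum j = (w.map Letter.degree).sum := by
    have := count_true_sub_count_false_flatten_map_brk w j
    rw [(h j).2, sub_self] at this
    linarith
  have hdeg : (w.map Letter.degree).sum = 0 := by
    have := sum_apply_sum_map_μval w
    simp only [hcoord, Finset.sum_const, Finset.card_univ, ZMod.card, nsmul_eq_mul,
      Nat.cast_ofNat] at this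
    linarith
  funext j
  rw [hcoord, hdeg, Pi.zero_apply]
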